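/- For a sequence (λ_n)_{n≥0} of complex numbers, the following are equivalent: (i) condition (c) holds, i.e. for every square-summable complex sequence (a_n)_{n≥0}, ∑_{n=0}^∞ |∑_{j=0}^n a_j λ_{n-j}|² = ∑_{n=0}^∞ |a_n|²; (ii) ∑_{n=0}^∞ |λ_n|² = 1, the power series φ(z) = ∑_{n=0}^∞ λ_n z^n converges on the open unit disk 𝔻 = {z ∈ ℂ : |z| < 1}, and |φ(z)| ≤ 1 for all z ∈ 𝔻. -/

import Mathlib

/-!
Write `φ(z) = ∑ λₙ zⁿ` and `a ⋆ λ` for the Cauchy product, so that `∑ (a ⋆ λ)ₙ zⁿ = φ(z) ∑ aₙ zⁿ`.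

If condition (c) holds, testing it on `δ₀` gives `‖λ‖₂ = 1`, and testing it on the reproducing
kernel `kᵤ = (conj uⁿ)` of a point `|u| < 1` gives, by Cauchy–Schwarz,
`|φ(u)| ‖kᵤ‖² = |⟪kᵤ, kᵤ ⋆ λ⟫| ≤ ‖kᵤ‖ ‖kᵤ ⋆ λ‖ = ‖kᵤ‖²`.

Conversely, if `|φ| ≤ 1` on the disk, Parseval's identity on the circles `|z| = r < 1` and
`r → 1` show that `a ↦ a ⋆ λ` is a contraction of `ℓ²`. It sends the `n`-th basis vector to `λ`
shifted by `n`, of norm `‖λ‖₂ = 1`; and a contraction that preserves the norms of the vectors of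
a Hilbert basis is an isometry, since it preserves the inner products of these vectors with
every vector.
-/

/-- Condition (c): for every square-summable complex sequence `a`, the
Cauchy product of `a` with `l` has the same `ℓ²` sum as `a`. -/
def ConditionC (l : ℕ → ℂ) : Prop :=
  ∀ a : ℕ → ℂ, Summable (fun n => ‖a n‖ ^ 2) →
    ∑' n : ℕ, ‖∑ j ∈ Finset.range (n + 1), a j * l (n - j)‖ ^ 2 = ∑' n : ℕ, ‖a n‖ ^ 2

open Finset Filter Topology MeasureTheory AddCircle
open scoped InnerProductSpace ComplexConjugate lp

theorem summable_of_tsum_ne_zero {ι M : Type*} [AddCommMonoid M] [TopologicalSpace M]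
    {f : ι → M} (h : ∑' i, f i ≠ 0) : Summable f :=
  by_contra fun hf => h (tsum_eq_zero_of_not_summable hf)

section InnerProductSpace

variable {𝕜 E F : Type*} [RCLike 𝕜] [NormedAddCommGroup E] [InnerProductSpace 𝕜 E]
  [NormedAddCommGroup F] [InnerProductSpace 𝕜 F]

theorem LinearMap.inner_map_map_of_norm_map_eq (T : E →ₗ[𝕜] F) (hT : ∀ x, ‖T x‖ ≤ ‖x‖)
    {x : E} (hx : ‖T x‖ = ‖x‖) (y : E) : ⟪T x, T y⟫_𝕜 = ⟪x, y⟫_𝕜 := by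
  set D := ⟪x, y⟫_𝕜 - ⟪T x, T y⟫_𝕜
  -- `‖x + s • y‖² - ‖T (x + s • y)‖² ≥ 0` vanishes at `s = 0`, so its linear term in `s`
  -- vanishes; the choice `s = -ε conj D` below makes this quantitative.
  have key : ∀ s : 𝕜, 0 ≤ 2 * RCLike.re (s * D) + ‖s‖ ^ 2 * ‖y‖ ^ 2 := by
    intro s
    have h := pow_le_pow_left₀ (norm_nonneg _) (hT (x + s • y)) 2
    rw [map_add, map_smul, norm_add_sq (𝕜 := 𝕜), norm_add_sq (𝕜 := 𝕜), inner_smul_right,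
      inner_smul_right, norm_smul, norm_smul, hx] at h
    have hy := pow_le_pow_left₀ (norm_nonneg _) (hT y) 2
    simp only [D, mul_sub, map_sub]
    nlinarith [sq_nonneg ‖s‖]
  set ε : ℝ := (‖y‖ ^ 2 + 1)⁻¹
  have hε : 0 < ε := by positivity
  have h := key (-((ε : 𝕜) * conj D))
  have hre : RCLike.re (-((ε : 𝕜) * conj D) * D) = -(ε * ‖D‖ ^ 2) := by
    rw [neg_mul, mul_assoc, RCLike.conj_mul, ← RCLike.ofReal_pow, ← RCLike.ofReal_mul, map_neg,
      RCLike.ofReal_re]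
  have hnorm : ‖-((ε : 𝕜) * conj D)‖ = ε * ‖D‖ := by
    rw [norm_neg, norm_mul, RCLike.norm_conj, RCLike.norm_ofReal, abs_of_pos hε]
  rw [hre, hnorm] at h
  have hεy : ε * ‖y‖ ^ 2 ≤ 1 := by
    rw [inv_mul_le_iff₀ (by positivity)]
    linarith
  have hD : ‖D‖ ^ 2 ≤ 0 := by
    nlinarith [sq_nonneg ‖D‖, mul_le_mul_of_nonneg_left hεy (mul_nonneg hε.le (sq_nonneg ‖D‖))]
  have : D = 0 := by simpa using hD
  exact (sub_eq_zero.mp this).symm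

theorem HilbertBasis.norm_map_eq_of_norm_map_le {ι : Type*} (b : HilbertBasis ι 𝕜 E)
    (T : E →L[𝕜] F) (hT : ∀ x, ‖T x‖ ≤ ‖x‖) (hb : ∀ i, ‖T (b i)‖ = 1) (x : E) :
    ‖T x‖ = ‖x‖ := by
  have h : (innerSL 𝕜 (T x)).comp T = innerSL 𝕜 x := by
    refine ContinuousLinearMap.ext_on (s := Set.range b) ?_ ?_
    · simp [Submodule.dense_iff_topologicalClosure_eq_top, b.dense_span]
    · rintro _ ⟨i, rfl⟩
      have := T.toLinearMap.inner_map_map_of_norm_map_eq hT (x := b i)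
        (by simpa [b.orthonormal.1 i] using hb i) x
      simp only [ContinuousLinearMap.coe_comp, Function.comp_apply, innerSL_apply_apply]
      rw [← inner_conj_symm, ← inner_conj_symm x]
      simpa using congrArg conj this
  have := congrArg (fun f => RCLike.re (f x)) h
  simp only [ContinuousLinearMap.coe_comp, Function.comp_apply, innerSL_apply_apply] at this
  rwa [← norm_sq_eq_re_inner, ← norm_sq_eq_re_inner, sq_eq_sq₀ (norm_nonneg _) (norm_nonneg _)]
    at this

theorem Orthonormal.hasSum_norm_sq {ι : Type*} {v : ι → E} (hv : Orthonormal 𝕜 v) {c : ι → 𝕜}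
    {x : E} (h : HasSum (fun i => c i • v i) x) : HasSum (fun i => ‖c i‖ ^ 2) (‖x‖ ^ 2) := by
  classical
  have hcoeff : ∀ i, ⟪v i, x⟫_𝕜 = c i := by
    intro i
    refine (h.mapL (innerSL 𝕜 (v i))).unique ?_
    convert hasSum_ite_eq i (c i) using 2 with j
    simp only [innerSL_apply_apply, inner_smul_right, orthonormal_iff_ite.mp hv]
    split_ifs <;> simp_all
  have := RCLike.reCLM.hasSum (h.mapL (innerSL 𝕜 x))
  simpa [inner_smul_right, ← inner_conj_symm x, hcoeff, RCLike.mul_conj, ← norm_sq_eq_re_inner]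
    using this

end InnerProductSpace

section l2

variable {ι 𝕜 : Type*} [RCLike 𝕜]

theorem memℓp_two_iff {E : ι → Type*} [∀ i, NormedAddCommGroup (E i)] {f : ∀ i, E i} :
    Memℓp f 2 ↔ Summable fun i => ‖f i‖ ^ 2 := by
  simpa using memℓp_gen_iff (p := 2) (f := f) (by norm_num)

theorem lp.norm_sq_eq_tsum {E : ι → Type*} [∀ i, NormedAddCommGroup (E i)] (f : lp E 2) :
    ‖f‖ ^ 2 = ∑' i, ‖f i‖ ^ 2 := by
  simpa using lp.norm_rpow_eq_tsum (p := 2) (by norm_num) f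

theorem norm_tsum_conj_mul_sq_le {u v : ι → 𝕜} (hu : Summable fun i => ‖u i‖ ^ 2)
    (hv : Summable fun i => ‖v i‖ ^ 2) :
    ‖∑' i, conj (u i) * v i‖ ^ 2 ≤ (∑' i, ‖u i‖ ^ 2) * ∑' i, ‖v i‖ ^ 2 := by
  let U : ℓ²(ι, 𝕜) := ⟨u, memℓp_two_iff.2 hu⟩
  let V : ℓ²(ι, 𝕜) := ⟨v, memℓp_two_iff.2 hv⟩
  have h : ⟪U, V⟫_𝕜 = ∑' i, conj (u i) * v i := by
    simp [U, V, lp.inner_eq_tsum, mul_comm]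
  rw [← h, ← lp.norm_sq_eq_tsum U, ← lp.norm_sq_eq_tsum V, ← mul_pow]
  exact pow_le_pow_left₀ (norm_nonneg _) (norm_inner_le_norm U V) 2

end l2

section Parseval

variable {T : ℝ}

theorem continuous_tsum_mul_toCircle_pow {c : ℕ → ℂ} (hc : Summable (‖c ·‖)) :
    Continuous fun t : AddCircle T => ∑' n, c n * (t.toCircle : ℂ) ^ n :=
  continuous_tsum (fun n => by fun_prop) hc fun n t => by simp [Circle.norm_coe]

variable [Fact (0 < T)]

theorem hasSum_norm_sq_integral_tsum_mul_toCircle_pow {c : ℕ → ℂ} (hc : Summable (‖c ·‖)) :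
    HasSum (fun n => ‖c n‖ ^ 2)
      (∫ t : AddCircle T, ‖∑' n, c n * (t.toCircle : ℂ) ^ n‖ ^ 2 ∂haarAddCircle) := by
  set g : C(AddCircle T, ℂ) := ⟨_, continuous_tsum_mul_toCircle_pow hc⟩
  have hs : HasSum (fun n => c n • fourier (n : ℤ)) g := by
    have hsum : Summable (fun n => c n • fourier (T := T) (n : ℤ)) :=
      Summable.of_norm (by simpa [norm_smul, fourier_norm] using hc)
    convert hsum.hasSum
    ext t
    rw [← ContinuousMap.tsum_apply hsum]
    simp [g, fourier_apply, toCircle_nsmul]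
  have hv : Orthonormal ℂ (fun n : ℕ => fourierLp (T := T) 2 n) :=
    orthonormal_fourier.comp _ Nat.cast_injective
  convert hv.hasSum_norm_sq (hs.mapL (ContinuousMap.toLp 2 haarAddCircle ℂ)) using 1
  rw [norm_sq_eq_re_inner (𝕜 := ℂ), ContinuousMap.inner_toLp]
  have hg : ∀ t, g t * conj (g t) = ((‖g t‖ ^ 2 : ℝ) : ℂ) := fun t => by
    rw [Complex.mul_conj', Complex.ofReal_pow]
  rw [integral_congr_ae (Eventually.of_forall hg), integral_complex_ofReal]
  exact (Complex.ofReal_re _).symm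

end Parseval

section PowerSeries

theorem summable_norm_mul_pow_of_summable_sq {a : ℕ → ℂ} (ha : Summable fun n => ‖a n‖ ^ 2)
    {z : ℂ} (hz : ‖z‖ < 1) : Summable fun n => ‖a n * z ^ n‖ := by
  have hg : Summable fun n => (‖z‖ ^ 2) ^ n :=
    summable_geometric_of_lt_one (sq_nonneg _) (by nlinarith [norm_nonneg z])
  refine Summable.of_nonneg_of_le (fun _ => norm_nonneg _) (fun n => ?_) (ha.add hg)
  rw [norm_mul, norm_pow, ← pow_mul, mul_comm 2, pow_mul]
  nlinarith [sq_nonneg (‖a n‖ - ‖z‖ ^ n), norm_nonneg (a n), pow_nonneg (norm_nonneg z) n]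

theorem summable_and_tsum_norm_sq_mul_pow_le {a c : ℕ → ℂ} {r : ℝ} (hr : 0 ≤ r)
    (ha : Summable fun n => ‖a n * (r : ℂ) ^ n‖) (hc : Summable fun n => ‖c n * (r : ℂ) ^ n‖)
    (h : ∀ z : ℂ, ‖z‖ = r → ‖∑' n, c n * z ^ n‖ ≤ ‖∑' n, a n * z ^ n‖) :
    Summable (fun n => ‖c n * (r : ℂ) ^ n‖ ^ 2) ∧
      ∑' n, ‖c n * (r : ℂ) ^ n‖ ^ 2 ≤ ∑' n, ‖a n * (r : ℂ) ^ n‖ ^ 2 := by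
  have hc' := hasSum_norm_sq_integral_tsum_mul_toCircle_pow (T := 1) hc
  have ha' := hasSum_norm_sq_integral_tsum_mul_toCircle_pow (T := 1) ha
  refine ⟨hc'.summable, ?_⟩
  rw [hc'.tsum_eq, ha'.tsum_eq]
  have hint : ∀ {b : ℕ → ℂ}, Summable (fun n => ‖b n * (r : ℂ) ^ n‖) →
      Integrable (fun t : UnitAddCircle => ‖∑' n, b n * (r : ℂ) ^ n * (t.toCircle : ℂ) ^ n‖ ^ 2)
        haarAddCircle := fun hb =>
    ((continuous_tsum_mul_toCircle_pow hb).norm.pow 2).integrable_of_hasCompactSupport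
      (.of_compactSpace _)
  refine integral_mono (hint hc) (hint ha) fun t => ?_
  have hz : ‖(r : ℂ) * t.toCircle‖ = r := by simp [Circle.norm_coe, abs_of_nonneg hr]
  simp only [mul_assoc, ← mul_pow]
  exact pow_le_pow_left₀ (norm_nonneg _) (h _ hz) 2

theorem summable_and_tsum_norm_sq_le_of_norm_tsum_le {a c : ℕ → ℂ}
    (ha : Summable fun n => ‖a n‖ ^ 2) (hc : ∀ z : ℂ, ‖z‖ < 1 → Summable fun n => ‖c n * z ^ n‖)
    (h : ∀ z : ℂ, ‖z‖ < 1 → ‖∑' n, c n * z ^ n‖ ≤ ‖∑' n, a n * z ^ n‖) :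
    Summable (fun n => ‖c n‖ ^ 2) ∧ ∑' n, ‖c n‖ ^ 2 ≤ ∑' n, ‖a n‖ ^ 2 := by
  have hr : ∀ r ∈ Set.Ioo (0 : ℝ) 1, ∀ J,
      ∑ n ∈ range J, ‖c n * (r : ℂ) ^ n‖ ^ 2 ≤ ∑' n, ‖a n‖ ^ 2 := by
    rintro r ⟨hr0, hr1⟩ J
    have hrC : ‖(r : ℂ)‖ < 1 := by simpa [abs_of_pos hr0] using hr1
    have hle : ∀ n, ‖a n * (r : ℂ) ^ n‖ ^ 2 ≤ ‖a n‖ ^ 2 := fun n => by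
      rw [norm_mul, norm_pow]
      gcongr
      exact mul_le_of_le_one_right (norm_nonneg _) (pow_le_one₀ (norm_nonneg _) hrC.le)
    obtain ⟨hs, hcomp⟩ := summable_and_tsum_norm_sq_mul_pow_le hr0.le
      (summable_norm_mul_pow_of_summable_sq ha hrC) (hc _ hrC) fun z hz => h z (hz ▸ hr1)
    calc ∑ n ∈ range J, ‖c n * (r : ℂ) ^ n‖ ^ 2
        ≤ ∑' n, ‖c n * (r : ℂ) ^ n‖ ^ 2 := hs.sum_le_tsum _ fun _ _ => sq_nonneg _
      _ ≤ ∑' n, ‖a n * (r : ℂ) ^ n‖ ^ 2 := hcomp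
      _ ≤ ∑' n, ‖a n‖ ^ 2 :=
        Summable.tsum_le_tsum hle (.of_nonneg_of_le (fun _ => sq_nonneg _) hle ha) ha
  have hJ : ∀ J, ∑ n ∈ range J, ‖c n‖ ^ 2 ≤ ∑' n, ‖a n‖ ^ 2 := by
    intro J
    have hlim : Tendsto (fun r : ℝ => ∑ n ∈ range J, ‖c n * (r : ℂ) ^ n‖ ^ 2) (𝓝[<] 1)
        (𝓝 (∑ n ∈ range J, ‖c n‖ ^ 2)) := by
      have hcont : Continuous fun r : ℝ => ∑ n ∈ range J, ‖c n * (r : ℂ) ^ n‖ ^ 2 := by fun_prop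
      simpa using (hcont.tendsto 1).mono_left nhdsWithin_le_nhds
    exact le_of_tendsto hlim <| eventually_of_mem (Ioo_mem_nhdsLT zero_lt_one) (hr · · J)
  exact ⟨summable_of_sum_range_le (fun _ => sq_nonneg _) hJ,
    Real.tsum_le_of_sum_range_le (fun _ => sq_nonneg _) hJ⟩

end PowerSeries

section CauchyProduct

def cauchyProduct (a b : ℕ → ℂ) (n : ℕ) : ℂ := ∑ j ∈ range (n + 1), a j * b (n - j)

theorem summable_and_tsum_cauchyProduct_mul_pow {a b : ℕ → ℂ} {z : ℂ}
    (ha : Summable fun n => ‖a n * z ^ n‖) (hb : Summable fun n => ‖b n * z ^ n‖) :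
    Summable (fun n => ‖cauchyProduct a b n * z ^ n‖) ∧
      ∑' n, cauchyProduct a b n * z ^ n = (∑' n, a n * z ^ n) * ∑' n, b n * z ^ n := by
  have h : ∀ n, cauchyProduct a b n * z ^ n =
      ∑ k ∈ range (n + 1), a k * z ^ k * (b (n - k) * z ^ (n - k)) := fun n => by
    rw [cauchyProduct, sum_mul]
    refine sum_congr rfl fun k hk => ?_
    rw [← pow_mul_pow_sub z (Nat.lt_succ_iff.mp (mem_range.mp hk))]
    ring
  simp_rw [h]
  exact ⟨summable_norm_sum_mul_range_of_summable_norm (f := fun n => a n * z ^ n)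
    (g := fun n => b n * z ^ n) ha hb, (tsum_mul_tsum_eq_tsum_sum_range_of_summable_norm
      (f := fun n => a n * z ^ n) (g := fun n => b n * z ^ n) ha hb).symm⟩

theorem cauchyProduct_single_one_left (l : ℕ → ℂ) (d n : ℕ) :
    cauchyProduct (Pi.single d 1) l n = if d ≤ n then l (n - d) else 0 := by
  simp [cauchyProduct, Pi.single_apply]

theorem tsum_ite_le_sub {M : Type*} [AddCommMonoid M] [TopologicalSpace M] (f : ℕ → M) (d : ℕ) :
    ∑' n, (if d ≤ n then f (n - d) else 0) = ∑' n, f n := by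
  rw [← (add_left_injective d).tsum_eq]
  · simp
  · intro n hn
    have : d ≤ n := by by_contra h; simp [h] at hn
    exact ⟨n - d, Nat.sub_add_cancel this⟩

theorem tsum_norm_sq_cauchyProduct_single_one_left (l : ℕ → ℂ) (d : ℕ) :
    ∑' n, ‖cauchyProduct (Pi.single d 1) l n‖ ^ 2 = ∑' n, ‖l n‖ ^ 2 := by
  simp_rw [cauchyProduct_single_one_left, apply_ite (‖·‖ ^ 2), norm_zero, zero_pow two_ne_zero]
  exact tsum_ite_le_sub (fun n => ‖l n‖ ^ 2) d

variable {l : ℕ → ℂ}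

theorem summable_and_tsum_norm_sq_cauchyProduct_le (hl : Summable fun n => ‖l n‖ ^ 2)
    (hφ : ∀ z : ℂ, ‖z‖ < 1 → ‖∑' n, l n * z ^ n‖ ≤ 1) {a : ℕ → ℂ}
    (ha : Summable fun n => ‖a n‖ ^ 2) :
    Summable (fun n => ‖cauchyProduct a l n‖ ^ 2) ∧
      ∑' n, ‖cauchyProduct a l n‖ ^ 2 ≤ ∑' n, ‖a n‖ ^ 2 := by
  have hprod := fun z (hz : ‖z‖ < 1) => summable_and_tsum_cauchyProduct_mul_pow
    (summable_norm_mul_pow_of_summable_sq ha hz) (summable_norm_mul_pow_of_summable_sq hl hz)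
  refine summable_and_tsum_norm_sq_le_of_norm_tsum_le ha (fun z hz => (hprod z hz).1)
    fun z hz => ?_
  rw [(hprod z hz).2, norm_mul]
  exact mul_le_of_le_one_right (norm_nonneg _) (hφ z hz)

theorem exists_clm_cauchyProduct (hl : Summable fun n => ‖l n‖ ^ 2)
    (hφ : ∀ z : ℂ, ‖z‖ < 1 → ‖∑' n, l n * z ^ n‖ ≤ 1) :
    ∃ T : ℓ²(ℕ, ℂ) →L[ℂ] ℓ²(ℕ, ℂ), (∀ a, ⇑(T a) = cauchyProduct a l) ∧ ∀ a, ‖T a‖ ≤ ‖a‖ := by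
  have hcontr := fun a : ℓ²(ℕ, ℂ) =>
    summable_and_tsum_norm_sq_cauchyProduct_le hl hφ (memℓp_two_iff.1 a.2)
  let T : ℓ²(ℕ, ℂ) →ₗ[ℂ] ℓ²(ℕ, ℂ) :=
    { toFun a := ⟨cauchyProduct a l, memℓp_two_iff.2 (hcontr a).1⟩
      map_add' a b := by ext n; simp [cauchyProduct, add_mul, sum_add_distrib]; rfl
      map_smul' c a := by ext n; simp [cauchyProduct, mul_sum, mul_assoc] }
  have hle : ∀ a, ‖T a‖ ≤ ‖a‖ := fun a => by
    rw [← sq_le_sq₀ (norm_nonneg _) (norm_nonneg _), lp.norm_sq_eq_tsum, lp.norm_sq_eq_tsum]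
    exact (hcontr a).2
  exact ⟨T.mkContinuous 1 fun a => by simpa using hle a, fun _ => rfl, hle⟩

theorem tsum_norm_sq_cauchyProduct_eq (hl : ∑' n, ‖l n‖ ^ 2 = 1)
    (hφ : ∀ z : ℂ, ‖z‖ < 1 → ‖∑' n, l n * z ^ n‖ ≤ 1) {a : ℕ → ℂ}
    (ha : Summable fun n => ‖a n‖ ^ 2) :
    ∑' n, ‖cauchyProduct a l n‖ ^ 2 = ∑' n, ‖a n‖ ^ 2 := by
  obtain ⟨T, hT, hTle⟩ := exists_clm_cauchyProduct (summable_of_tsum_ne_zero (by simp [hl])) hφ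
  let b : HilbertBasis ℕ ℂ ℓ²(ℕ, ℂ) := ⟨LinearIsometryEquiv.refl ℂ _⟩
  have hb : ∀ d, ‖T (b d)‖ = 1 := fun d => by
    have hbd : ⇑(b d) = Pi.single d 1 := by
      rw [← b.repr_symm_single]
      exact lp.coeFn_single 2 d 1
    rw [← sq_eq_sq₀ (norm_nonneg _) zero_le_one, one_pow, lp.norm_sq_eq_tsum, hT, hbd,
      tsum_norm_sq_cauchyProduct_single_one_left, hl]
  have := b.norm_map_eq_of_norm_map_le T hTle hb ⟨a, memℓp_two_iff.2 ha⟩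
  rwa [← sq_eq_sq₀ (norm_nonneg _) (norm_nonneg _), lp.norm_sq_eq_tsum, lp.norm_sq_eq_tsum, hT]
    at this

theorem ConditionC.tsum_norm_sq_eq_one (hC : ConditionC l) : ∑' n, ‖l n‖ ^ 2 = 1 := by
  let δ : ℕ → ℂ := Pi.single 0 1
  have h : ∑' n, ‖cauchyProduct δ l n‖ ^ 2 = ∑' n, ‖δ n‖ ^ 2 :=
    hC δ (summable_of_ne_finset_zero (s := {0}) fun n hn => by simp_all [δ])
  rw [← tsum_norm_sq_cauchyProduct_single_one_left l 0, h,
    tsum_eq_single 0 fun n hn => by simp [δ, hn]]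
  simp [δ]

theorem ConditionC.summable_norm_sq (hC : ConditionC l) : Summable fun n => ‖l n‖ ^ 2 :=
  summable_of_tsum_ne_zero (by simp [hC.tsum_norm_sq_eq_one])

theorem ConditionC.norm_tsum_mul_pow_le_one (hC : ConditionC l) {z : ℂ} (hz : ‖z‖ < 1) :
    ‖∑' n, l n * z ^ n‖ ≤ 1 := by
  have hz2 : ‖z‖ ^ 2 < 1 := by nlinarith [norm_nonneg z]
  set K : ℝ := (1 - ‖z‖ ^ 2)⁻¹
  have hK : 0 < K := inv_pos.2 (by linarith)
  set k : ℕ → ℂ := fun n => conj z ^ n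
  have hk : HasSum (fun n => ‖k n‖ ^ 2) K := by
    convert hasSum_geometric_of_lt_one (sq_nonneg ‖z‖) hz2 using 2 with n
    simp [k, ← pow_mul, mul_comm]
  have hkz : HasSum (fun n => k n * z ^ n) K := by
    convert Complex.ofRealCLM.hasSum hk using 2 with n
    · simp [k, ← mul_pow, Complex.mul_conj', ← pow_mul, mul_comm]
    · rfl
  have hb : ∑' n, ‖cauchyProduct k l n‖ ^ 2 = K := (hC k hk.summable).trans hk.tsum_eq
  have hprod := (summable_and_tsum_cauchyProduct_mul_pow
    (summable_norm_mul_pow_of_summable_sq hk.summable hz)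
    (summable_norm_mul_pow_of_summable_sq hC.summable_norm_sq hz)).2
  have hCS := norm_tsum_conj_mul_sq_le hk.summable (summable_of_tsum_ne_zero (hb ▸ hK.ne'))
  have hconj : ∀ n, conj (k n) * cauchyProduct k l n = cauchyProduct k l n * z ^ n := fun n => by
    simp [k, mul_comm]
  simp_rw [hconj] at hCS
  rw [hprod, hkz.tsum_eq, hk.tsum_eq, hb, norm_mul, Complex.norm_real, Real.norm_of_nonneg hK.le,
    ← sq, pow_le_pow_iff_left₀ (by positivity) hK.le two_ne_zero] at hCS
  exact le_of_mul_le_mul_left (by simpa using hCS) hK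

end CauchyProduct

/-- `(λ_n)` satisfies condition (c) iff `∑_n |λ_n|² = 1` and the power series
`∑ λ_n z^n` converges on the open unit disk with sum bounded by one there. -/
theorem conditionC_iff_norm_one_and_bounded (l : ℕ → ℂ) :
    ConditionC l ↔
      (∑' n : ℕ, ‖l n‖ ^ 2 = 1) ∧
        ∀ z : ℂ, ‖z‖ < 1 →
          Summable (fun n : ℕ => l n * z ^ n) ∧ ‖∑' n : ℕ, l n * z ^ n‖ ≤ 1 := by
  constructor
  · intro hC
    exact ⟨hC.tsum_norm_sq_eq_one, fun z hz =>
      ⟨(summable_norm_mul_pow_of_summable_sq hC.summable_norm_sq hz).of_norm,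
        hC.norm_tsum_mul_pow_le_one hz⟩⟩
  · rintro ⟨hl, hφ⟩ a ha
    exact tsum_norm_sq_cauchyProduct_eq hl (fun z hz => (hφ z hz).2) ha
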